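/- For matrices A ∈ ℂ^{M×K}, B ∈ ℂ^{M×L} and vectors/matrices a ∈ ℂ^{K}, C ∈ ℂ^{L×N}: diag(A a) · (B C) = (A •ᵣ B) · (a ⊗ C), where •ᵣ denotes the row-wise (transposed) Khatri-Rao product whose i-th row is the Kronecker product of the i-th row of A with the i-th row of B, and a ⊗ C is the Kronecker product of the column vector a with C. -/

import Mathlib

open Complex Matrix

/-- Row-wise (transposed) Khatri-Rao product. -/
def rowKR {M K L : ℕ} (A : Matrix (Fin M) (Fin K) ℂ) (B : Matrix (Fin M) (Fin L) ℂ) :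
    Matrix (Fin M) (Fin K × Fin L) ℂ :=
  Matrix.of fun i kl => A i kl.1 * B i kl.2

/-- Kronecker product of a column vector with a matrix. -/
def kronVecMat {K L N : ℕ} (a : Fin K → ℂ) (C : Matrix (Fin L) (Fin N) ℂ) :
    Matrix (Fin K × Fin L) (Fin N) ℂ :=
  Matrix.of fun kl n => a kl.1 * C kl.2 n

/- Entry `(i, n)` of the right-hand side is a double sum over `(k, l)` that factors as
`(∑ k, A i k * a k) * (∑ l, B i l * C l n)`. -/
theorem rowKR_mul_kronVecMat_apply {M K L N : ℕ} (A : Matrix (Fin M) (Fin K) ℂ)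
    (B : Matrix (Fin M) (Fin L) ℂ) (a : Fin K → ℂ) (C : Matrix (Fin L) (Fin N) ℂ)
    (i : Fin M) (n : Fin N) :
    (rowKR A B * kronVecMat a C) i n = (A *ᵥ a) i * (B * C) i n := by
  calc (rowKR A B * kronVecMat a C) i n
      = ∑ k, ∑ l, A i k * a k * (B i l * C l n) := by
        simp only [mul_apply, rowKR, kronVecMat, of_apply, Fintype.sum_prod_type]
        exact Finset.sum_congr rfl fun _ _ => Finset.sum_congr rfl fun _ _ => by ring
    _ = (A *ᵥ a) i * (B * C) i n := by
        rw [mulVec, dotProduct, mul_apply, Fintype.sum_mul_sum]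

/-- diag(A a) · (B C) = (A •ᵣ B) · (a ⊗ C). -/
theorem diag_mulVec_mul_eq_khatriRao_kron (M K L N : ℕ)
    (A : Matrix (Fin M) (Fin K) ℂ) (B : Matrix (Fin M) (Fin L) ℂ)
    (a : Fin K → ℂ) (C : Matrix (Fin L) (Fin N) ℂ) :
    Matrix.diagonal (A.mulVec a) * (B * C) = rowKR A B * kronVecMat a C := by
  ext i n
  rw [diagonal_mul, rowKR_mul_kronVecMat_apply]
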